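/- arXiv:1404.5555 — 4 statements merged into one kernel-verified Lean document; each statement's English description precedes it below -/
import Mathlib

section
/- Let 0 < a < 1 and r_0 = 2/(1-a). With f(x) = x·e^{r(1-x)(x-a)}, the Schwarzian derivative of f at the fixed point x = 1 when r = r_0 equals 2r_0(a - 4 - 3r_0), which is negative for all a ∈ (0,1). -/
/-!
Both `f = X · exp ∘ Q` with `Q = r(1 - X)(X - a)` and its derivatives have the shape
`P · exp ∘ Q` for a polynomial `P`, and differentiation acts on `P` by `P ↦ P' + P Q'`.
At the fixed point `1` we have `Q(1) = 0`, so `f^(n)(1)` is this operator iterated `n` times on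
`X` and evaluated at `1`: a polynomial in `r` and `s = r(1 - a)`. For `r = r₀` one has `s = 2`,
giving `f'(1) = -1`, `f''(1) = -2r₀` and `f'''(1) = 6r₀ + 4`.
-/

open Real Polynomial

noncomputable def mulExpDeriv (Q P : ℝ[X]) : ℝ[X] := derivative P + P * derivative Q

theorem hasDerivAt_eval_mul_exp_eval (P Q : ℝ[X]) (x : ℝ) :
    HasDerivAt (fun x => P.eval x * exp (Q.eval x))
      ((mulExpDeriv Q P).eval x * exp (Q.eval x)) x :=
  ((P.hasDerivAt x).mul (Q.hasDerivAt x).exp).congr_deriv <| by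
    simp only [mulExpDeriv, eval_add, eval_mul]
    ring

theorem iterate_deriv_eval_mul_exp_eval (P Q : ℝ[X]) (n : ℕ) :
    deriv^[n] (fun x => P.eval x * exp (Q.eval x))
      = fun x => ((mulExpDeriv Q)^[n] P).eval x * exp (Q.eval x) := by
  induction n generalizing P with
  | zero => rfl
  | succ n ih =>
    have hderiv : deriv (fun x => P.eval x * exp (Q.eval x))
        = fun x => (mulExpDeriv Q P).eval x * exp (Q.eval x) :=
      funext fun x => (hasDerivAt_eval_mul_exp_eval P Q x).deriv
    rw [Function.iterate_succ_apply, Function.iterate_succ_apply, hderiv, ih]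

noncomputable def alleeRicker (r a x : ℝ) : ℝ := x * exp (r * (1 - x) * (x - a))

namespace alleeRicker

variable (r a : ℝ)

theorem iterate_deriv_apply_one (n : ℕ) :
    deriv^[n] (alleeRicker r a) 1
      = ((mulExpDeriv (C r * (1 - X) * (X - C a)))^[n] X).eval 1 := by
  have hpoly : alleeRicker r a
      = fun x => (X : ℝ[X]).eval x * exp ((C r * (1 - X) * (X - C a)).eval x) := by
    ext x; simp [alleeRicker]
  rw [hpoly, iterate_deriv_eval_mul_exp_eval]
  simp

theorem deriv_apply_one : deriv (alleeRicker r a) 1 = 1 - r * (1 - a) := by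
  rw [← Function.iterate_one deriv, iterate_deriv_apply_one]
  simp only [Function.iterate_succ_apply', Function.iterate_zero_apply, mulExpDeriv,
    derivative_mul, derivative_sub, derivative_X, derivative_C, derivative_one,
    eval_add, eval_mul, eval_sub, eval_C, eval_X, eval_one, eval_zero]
  ring

theorem iterate_two_deriv_apply_one :
    deriv^[2] (alleeRicker r a) 1 = (r * (1 - a)) ^ 2 - 2 * (r * (1 - a)) - 2 * r := by
  rw [iterate_deriv_apply_one]
  simp only [Function.iterate_succ_apply', Function.iterate_zero_apply, mulExpDeriv,
    derivative_add, derivative_mul, derivative_sub, derivative_X, derivative_C, derivative_one,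
    derivative_zero, eval_add, eval_mul, eval_sub, eval_C, eval_X, eval_one, eval_zero]
  ring

theorem iterate_three_deriv_apply_one :
    deriv^[3] (alleeRicker r a) 1
      = -(r * (1 - a)) ^ 3 + 3 * (r * (1 - a)) ^ 2 + 6 * r * (r * (1 - a)) - 6 * r := by
  rw [iterate_deriv_apply_one]
  simp only [Function.iterate_succ_apply', Function.iterate_zero_apply, mulExpDeriv,
    derivative_add, derivative_mul, derivative_sub, derivative_X, derivative_C, derivative_one,
    derivative_zero, eval_add, eval_mul, eval_sub, eval_C, eval_X, eval_one, eval_zero]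
  ring

end alleeRicker

theorem stmt_6_general (a r0 : ℝ) (ha1 : a < 1) (hr0 : r0 = 2 / (1 - a))
    (f : ℝ → ℝ) (hf : f = fun x => x * Real.exp (r0 * (1 - x) * (x - a))) :
    deriv^[3] f 1 / deriv f 1 - (3 / 2) * (deriv^[2] f 1 / deriv f 1) ^ 2
      = 2 * r0 * (a - 4 - 3 * r0) ∧
    2 * r0 * (a - 4 - 3 * r0) < 0 := by
  have hr0_pos : 0 < r0 := hr0 ▸ div_pos two_pos (sub_pos.2 ha1)
  have hr0a : r0 * (1 - a) = 2 := by rw [hr0]; field_simp [(sub_pos.2 ha1).ne']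
  replace hf : f = alleeRicker r0 a := hf
  subst hf
  have h1 := alleeRicker.deriv_apply_one r0 a
  have h2 := alleeRicker.iterate_two_deriv_apply_one r0 a
  have h3 := alleeRicker.iterate_three_deriv_apply_one r0 a
  rw [hr0a] at h1 h2 h3
  refine ⟨?_, mul_neg_of_pos_of_neg (by positivity) (by linarith)⟩
  rw [h1, h2, h3]
  linear_combination 2 * hr0a

theorem stmt_6 (a r0 : ℝ) (ha : 0 < a) (ha1 : a < 1) (hr0 : r0 = 2 / (1 - a))
    (f : ℝ → ℝ) (hf : f = fun x => x * Real.exp (r0 * (1 - x) * (x - a))) :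
    deriv^[3] f 1 / deriv f 1 - (3 / 2) * (deriv^[2] f 1 / deriv f 1) ^ 2
      = 2 * r0 * (a - 4 - 3 * r0) ∧
    2 * r0 * (a - 4 - 3 * r0) < 0 :=
  stmt_6_general a r0 ha1 hr0 f hf
end

section
/- Let 0 < a < 1 and 0 < r < 1/(1-a) (i.e. r < r_0/2 where r_0 = 2/(1-a)). For the map f(x) = x·e^{r(1-x)(x-a)}: if x ∈ (a,1) then a < x < f(x) < 1, and if x ∈ (1, x_m] then 1 < f(x) < x, where x_m > 1 is the critical point of f. Consequently every orbit starting in (a, x_m] converges to 1. -/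
/-!
Write `y = r (1 - x) (x - a)`, so that `f x = x e^y`. On `(a, 1)` we have `y > 0`, hence `f x > x`,
and `r (x - a) < r (1 - a) ≤ 1` gives `y < 1 - x`, hence `x < 1 - y ≤ e^{-y}`, i.e. `f x < 1`.
On `(1, x_m]` we have `y < 0`, hence `f x < x`, while `e^y ≥ 1 + y` gives
`f x ≥ x - (x - 1) r x (x - a) > 1`, because `r x (x - a) < 1` up to the critical point.
So every orbit from `(a, x_m]` is monotone and trapped on one side of `1`; its limit is a fixed
point of `f`, and `1` is the only one available.
-/

open Real Filter Set

section MonotoneOrbit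

open Topology

variable {α : Type*} [ConditionallyCompleteLinearOrder α] [TopologicalSpace α] [OrderTopology α]
  {f : α → α} {x₀ b : α}

theorem tendsto_iterate_of_lt_map_lt (hf : Continuous f) (hx₀ : x₀ < b)
    (hstep : ∀ x ∈ Ico x₀ b, x < f x ∧ f x < b) :
    Tendsto (fun n => f^[n] x₀) atTop (𝓝 b) := by
  have hmem : ∀ n, f^[n] x₀ ∈ Ico x₀ b := by
    intro n
    induction n with
    | zero => exact ⟨le_rfl, hx₀⟩
    | succ n ih =>
      rw [Function.iterate_succ_apply']
      exact ⟨ih.1.trans (hstep _ ih).1.le, (hstep _ ih).2⟩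
  have hmono : Monotone fun n => f^[n] x₀ := monotone_nat_of_le_succ fun n => by
    rw [Function.iterate_succ_apply']
    exact (hstep _ (hmem n)).1.le
  have hbdd : BddAbove (range fun n => f^[n] x₀) :=
    ⟨b, by rintro _ ⟨n, rfl⟩; exact (hmem n).2.le⟩
  have hlim := tendsto_atTop_ciSup hmono hbdd
  set L := ⨆ n, f^[n] x₀
  have hfix : f L = L := isFixedPt_of_tendsto_iterate hlim hf.continuousAt
  have hL : L = b := by
    refine (ciSup_le fun n => (hmem n).2.le).eq_of_not_lt fun hLb => ?_
    have hxL : x₀ ≤ L := le_ciSup_of_le hbdd 0 le_rfl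
    exact (hstep L ⟨hxL, hLb⟩).1.ne' hfix
  rwa [hL] at hlim

theorem tendsto_iterate_of_map_lt_lt (hf : Continuous f) (hx₀ : b < x₀)
    (hstep : ∀ x ∈ Ioc b x₀, b < f x ∧ f x < x) :
    Tendsto (fun n => f^[n] x₀) atTop (𝓝 b) :=
  tendsto_iterate_of_lt_map_lt (α := αᵒᵈ) hf hx₀ fun x hx => (hstep x ⟨hx.2, hx.1⟩).symm

end MonotoneOrbit

noncomputable def rickerAllee (a r x : ℝ) : ℝ := x * exp (r * (1 - x) * (x - a))

/-- The positive root of `2 r x² - r (1 + a) x - 1 = 0`, where the derivative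
`exp (r (1 - x) (x - a)) * (1 - r x (2 x - 1 - a))` of `rickerAllee a r` vanishes. -/
noncomputable def rickerAlleeCriticalPoint (a r : ℝ) : ℝ :=
  (1 + a) / 4 + √((a + 1) ^ 2 * r ^ 2 + 8 * r) / (4 * r)

section RickerAllee

variable {a r x : ℝ}

theorem continuous_rickerAllee : Continuous (rickerAllee a r) := by
  unfold rickerAllee
  fun_prop

theorem rickerAllee_one : rickerAllee a r 1 = 1 := by
  simp [rickerAllee]

theorem lt_rickerAllee (ha : 0 ≤ a) (hr : 0 < r) (hx : x ∈ Ioo a 1) :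
    x < rickerAllee a r x := by
  have hexp : 0 < r * (1 - x) * (x - a) :=
    mul_pos (mul_pos hr (sub_pos.2 hx.2)) (sub_pos.2 hx.1)
  exact lt_mul_of_one_lt_right (ha.trans_lt hx.1) (one_lt_exp_iff.2 hexp)

theorem rickerAllee_lt_one (hr : 0 < r) (hra : r * (1 - a) ≤ 1) (hx : x ∈ Ioo a 1) :
    rickerAllee a r x < 1 := by
  set y := r * (1 - x) * (x - a)
  have hrx : r * (x - a) < 1 := by nlinarith [hx.2]
  have hy : y < 1 - x := by nlinarith [hx.1, hx.2]
  calc x * exp y < exp (-y) * exp y :=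
        mul_lt_mul_of_pos_right (by linarith [add_one_le_exp (-y)]) (exp_pos y)
    _ = 1 := by rw [← exp_add, neg_add_cancel, exp_zero]

theorem rickerAllee_lt_self (hr : 0 < r) (ha : a ≤ 1) (hx : 1 < x) : rickerAllee a r x < x := by
  have hexp : r * (1 - x) * (x - a) < 0 :=
    mul_neg_of_neg_of_pos (mul_neg_of_pos_of_neg hr (by linarith)) (by linarith)
  exact mul_lt_of_lt_one_right (by linarith) (exp_lt_one_iff.2 hexp)

theorem one_lt_rickerAllee (hx : 1 < x) (hrx : r * x * (x - a) < 1) : 1 < rickerAllee a r x := by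
  set y := r * (1 - x) * (x - a)
  calc 1 < x * (1 + y) := by nlinarith [mul_lt_mul_of_pos_left hrx (sub_pos.2 hx)]
    _ ≤ x * exp y := mul_le_mul_of_nonneg_left (by linarith [add_one_le_exp y]) (by linarith)

theorem rickerAlleeCriticalPoint_spec (hr : 0 < r) :
    r * rickerAlleeCriticalPoint a r * (2 * rickerAlleeCriticalPoint a r - (1 + a)) = 1 := by
  have hsq : √((a + 1) ^ 2 * r ^ 2 + 8 * r) ^ 2 = (a + 1) ^ 2 * r ^ 2 + 8 * r :=
    sq_sqrt (by positivity)
  unfold rickerAlleeCriticalPoint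
  generalize √((a + 1) ^ 2 * r ^ 2 + 8 * r) = s at hsq ⊢
  field_simp
  linear_combination 2 * hsq

theorem mul_mul_sub_lt_one_of_le_rickerAlleeCriticalPoint (hr : 0 < r) (ha : a ≤ 1) (hx : 1 < x)
    (hxc : x ≤ rickerAlleeCriticalPoint a r) : r * x * (x - a) < 1 := by
  set c := rickerAlleeCriticalPoint a r
  calc r * x * (x - a) ≤ r * c * (c - a) := by
        nlinarith [mul_nonneg hr.le (sub_nonneg.2 hxc)]
    _ < r * c * (2 * c - (1 + a)) := by
        have hc : 0 < r * c := mul_pos hr (by linarith)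
        exact mul_lt_mul_of_pos_left (by linarith) hc
    _ = 1 := rickerAlleeCriticalPoint_spec hr

end RickerAllee

theorem stmt_9_general (a r : ℝ) (ha : 0 < a) (ha1 : a < 1) (hr : 0 < r)
    (hr2 : r < 1 / (1 - a))
    (f : ℝ → ℝ) (hf : f = fun x => x * Real.exp (r * (1 - x) * (x - a)))
    (xm : ℝ)
    (hxm : xm = (1 + a) / 4 + Real.sqrt ((a + 1) ^ 2 * r ^ 2 + 8 * r) / (4 * r)) :
    (∀ x ∈ Set.Ioo a 1, a < x ∧ x < f x ∧ f x < 1) ∧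
    (∀ x ∈ Set.Ioc 1 xm, 1 < f x ∧ f x < x) ∧
    (∀ x0 ∈ Set.Ioc a xm, Tendsto (fun t => f^[t] x0) atTop (nhds 1)) := by
  obtain rfl : f = rickerAllee a r := hf
  obtain rfl : xm = rickerAlleeCriticalPoint a r := hxm
  have hra : r * (1 - a) ≤ 1 := ((lt_div_iff₀ (sub_pos.2 ha1)).1 hr2).le
  have below : ∀ x ∈ Ioo a 1, a < x ∧ x < rickerAllee a r x ∧ rickerAllee a r x < 1 :=
    fun x hx => ⟨hx.1, lt_rickerAllee ha.le hr hx, rickerAllee_lt_one hr hra hx⟩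
  have above : ∀ x ∈ Ioc 1 (rickerAlleeCriticalPoint a r),
      1 < rickerAllee a r x ∧ rickerAllee a r x < x := fun x hx =>
    ⟨one_lt_rickerAllee hx.1
        (mul_mul_sub_lt_one_of_le_rickerAlleeCriticalPoint hr ha1.le hx.1 hx.2),
      rickerAllee_lt_self hr ha1.le hx.1⟩
  refine ⟨below, above, fun x₀ hx₀ => ?_⟩
  rcases lt_trichotomy x₀ 1 with hlt | rfl | hgt
  · exact tendsto_iterate_of_lt_map_lt continuous_rickerAllee hlt fun x hx =>
      (below x ⟨hx₀.1.trans_le hx.1, hx.2⟩).2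
  · simp only [Function.iterate_fixed rickerAllee_one]
    exact tendsto_const_nhds
  · exact tendsto_iterate_of_map_lt_lt continuous_rickerAllee hgt fun x hx =>
      above x ⟨hx.1, hx.2.trans hx₀.2⟩

theorem stmt_9 (a r : ℝ) (ha : 0 < a) (ha1 : a < 1) (hr : 0 < r)
    (hr2 : r < 1 / (1 - a))
    (f : ℝ → ℝ) (hf : f = fun x => x * Real.exp (r * (1 - x) * (x - a)))
    (xm : ℝ)
    (hxm : xm = (1 + a) / 4 + Real.sqrt ((a + 1) ^ 2 * r ^ 2 + 8 * r) / (4 * r))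
    (hxm1 : 1 < xm) :
    (∀ x ∈ Set.Ioo a 1, a < x ∧ x < f x ∧ f x < 1) ∧
    (∀ x ∈ Set.Ioc 1 xm, 1 < f x ∧ f x < x) ∧
    (∀ x0 ∈ Set.Ioc a xm, Tendsto (fun t => f^[t] x0) atTop (nhds 1)) :=
  stmt_9_general a r ha ha1 hr hr2 f hf xm hxm
end

section
/- Consider the planar map F(x,y) = (x e^{r(1-x)(x-a) - y}, βx(1 - e^{-y})) with 0 < a < 1 and r, β > 0. Every forward orbit with nonnegative initial data remains nonnegative and is bounded: x(t) ≤ f(x_m) and y(t) ≤ β f(x_m) for all t ≥ 2, where f(x)=x e^{r(1-x)(x-a)} and x_m is its critical point. Moreover, if x(0) ≤ a and (x(0),y(0)) ≠ (a,0), or x(0) ≥ x_a and (x(0),y(0)) ≠ (x_a,0), then (x(t),y(t)) → (0,0). -/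
/-!
Since `y ≥ 0`, the factor `e^{-y}` only shrinks the host, so `x(t+1) ≤ f(x(t)) ≤ f(x_m)` and
`y(t+1) ≤ β x(t)`; this gives the bounds. Below the Allee threshold the per-capita growth rate
`r(1-x)(x-a)` is negative and bounded away from zero, so once `x(t₀) < a` the host decays
geometrically and the parasitoid follows it. The excluded initial conditions are exactly the fixed
points `(a,0)` and `(x_a,0)`: otherwise `x(1) = f(x(0)) e^{-y(0)} < a`, because `f ≤ a` on
`[0, a] ∪ [x_a, ∞)` with equality only at `a` and `x_a`, `f` being decreasing beyond `x_m`.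
-/

open Real Filter Set

noncomputable def hostGrowth (a r x : ℝ) : ℝ := x * exp (r * (1 - x) * (x - a))

def IsOrbit (a r β : ℝ) (x y : ℕ → ℝ) : Prop :=
  ∀ t, x (t + 1) = x t * exp (r * (1 - x t) * (x t - a) - y t) ∧
    y (t + 1) = β * x t * (1 - exp (-(y t)))

section HostGrowth

variable {a r xm : ℝ}

lemma hasDerivAt_hostGrowth (a r u : ℝ) :
    HasDerivAt (hostGrowth a r)
      (exp (r * (1 - u) * (u - a)) * (1 + u * (r * ((1 - u) - (u - a))))) u := by
  have hexp : HasDerivAt (fun x => r * (1 - x) * (x - a)) (r * ((1 - u) - (u - a))) u := by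
    have := (((hasDerivAt_id u).const_sub 1).const_mul r).mul ((hasDerivAt_id u).sub_const a)
    exact this.congr_deriv (by simp only [id_eq]; ring)
  exact ((hasDerivAt_id u).mul hexp.exp).congr_deriv (by simp only [id_eq]; ring)

lemma continuous_hostGrowth (a r : ℝ) : Continuous (hostGrowth a r) := by
  unfold hostGrowth; fun_prop

lemma hostGrowth_self (a r : ℝ) : hostGrowth a r a = a := by
  simp [hostGrowth]

lemma hostGrowth_lt_of_lt (hr : 0 < r) (ha1 : a ≤ 1) {u : ℝ} (hu0 : 0 ≤ u) (hua : u < a) :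
    hostGrowth a r u < a := by
  have hexp : exp (r * (1 - u) * (u - a)) ≤ 1 :=
    exp_le_one_iff.mpr (mul_nonpos_of_nonneg_of_nonpos (by nlinarith) (by linarith))
  calc hostGrowth a r u ≤ u * 1 := mul_le_mul_of_nonneg_left hexp hu0
    _ < a := by linarith

/-- `xm` is the larger root of `2 r u² - r (1 + a) u - 1`, the numerator of `f'` up to sign. -/
lemma critical_point_spec (hr : 0 < r)
    (hxm : xm = (1 + a) / 4 + sqrt ((a + 1) ^ 2 * r ^ 2 + 8 * r) / (4 * r)) :
    2 * r * xm ^ 2 - r * (1 + a) * xm - 1 = 0 ∧ 1 + a < 2 * xm := by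
  set s := sqrt ((a + 1) ^ 2 * r ^ 2 + 8 * r)
  have hs : s ^ 2 = (a + 1) ^ 2 * r ^ 2 + 8 * r := sq_sqrt (by positivity)
  have hs_gt : (a + 1) * r < s := by
    apply lt_sqrt_of_sq_lt
    nlinarith
  have h4 : 4 * r * xm = r * (1 + a) + s := by
    rw [hxm]; field_simp
  constructor
  · have h8 : (2 * r * xm ^ 2 - r * (1 + a) * xm - 1) * (8 * r) = 0 := by
      linear_combination (4 * r * xm + s - r * (1 + a)) * h4 + hs
    exact (mul_eq_zero.mp h8).resolve_right (by positivity)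
  · nlinarith

lemma deriv_hostGrowth_factor_eq (hq : 2 * r * xm ^ 2 - r * (1 + a) * xm - 1 = 0) (u : ℝ) :
    1 + u * (r * ((1 - u) - (u - a))) = (xm - u) * (2 * r * (u + xm) - r * (1 + a)) := by
  linear_combination -hq

lemma critical_point_pos (hr : 0 < r) (hq : 2 * r * xm ^ 2 - r * (1 + a) * xm - 1 = 0)
    (hxm : 1 + a < 2 * xm) : 0 < xm := by
  have hprod : xm * (r * (2 * xm - (1 + a))) = 1 := by linear_combination hq
  by_contra! h
  have hslope : 0 ≤ r * (2 * xm - (1 + a)) := mul_nonneg hr.le (by linarith)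
  nlinarith [mul_nonneg (neg_nonneg.mpr h) hslope]

lemma strictMonoOn_hostGrowth (hr : 0 < r) (hq : 2 * r * xm ^ 2 - r * (1 + a) * xm - 1 = 0)
    (hxm : 1 + a < 2 * xm) : StrictMonoOn (hostGrowth a r) (Icc 0 xm) := by
  refine strictMonoOn_of_deriv_pos (convex_Icc 0 xm) (continuous_hostGrowth a r).continuousOn ?_
  intro u hu
  rw [interior_Icc] at hu
  have : 0 < 2 * r * (u + xm) - r * (1 + a) := by nlinarith [hu.1]
  rw [(hasDerivAt_hostGrowth a r u).deriv, deriv_hostGrowth_factor_eq hq]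
  exact mul_pos (exp_pos _) (mul_pos (by linarith [hu.2]) this)

lemma strictAntiOn_hostGrowth (hr : 0 < r) (hq : 2 * r * xm ^ 2 - r * (1 + a) * xm - 1 = 0)
    (hxm : 1 + a < 2 * xm) : StrictAntiOn (hostGrowth a r) (Ici xm) := by
  refine strictAntiOn_of_deriv_neg (convex_Ici xm) (continuous_hostGrowth a r).continuousOn ?_
  intro u hu
  rw [interior_Ici] at hu
  have : 0 < 2 * r * (u + xm) - r * (1 + a) := by
    nlinarith [mem_Ioi.mp hu, critical_point_pos hr hq hxm]
  rw [(hasDerivAt_hostGrowth a r u).deriv, deriv_hostGrowth_factor_eq hq]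
  exact mul_neg_of_pos_of_neg (exp_pos _) (mul_neg_of_neg_of_pos (by linarith [mem_Ioi.mp hu]) this)

lemma hostGrowth_le_critical (hr : 0 < r) (hq : 2 * r * xm ^ 2 - r * (1 + a) * xm - 1 = 0)
    (hxm : 1 + a < 2 * xm) {u : ℝ} (hu : 0 ≤ u) : hostGrowth a r u ≤ hostGrowth a r xm := by
  have hxm0 := (critical_point_pos hr hq hxm).le
  rcases le_or_gt u xm with h | h
  · exact (strictMonoOn_hostGrowth hr hq hxm).monotoneOn ⟨hu, h⟩ ⟨hxm0, le_rfl⟩ h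
  · exact (strictAntiOn_hostGrowth hr hq hxm).antitoneOn self_mem_Ici (mem_Ici.mpr h.le) h.le

lemma hostGrowth_le_threshold_of_not_fixed (hr : 0 < r) (ha1 : a ≤ 1)
    (hq : 2 * r * xm ^ 2 - r * (1 + a) * xm - 1 = 0) (hxm : 1 + a < 2 * xm) {xa : ℝ}
    (hxm_xa : xm ≤ xa) (hxa : hostGrowth a r xa = a) {u v : ℝ} (hu : 0 ≤ u) (hv : 0 ≤ v)
    (h : (u ≤ a ∧ (u, v) ≠ (a, 0)) ∨ (xa ≤ u ∧ (u, v) ≠ (xa, 0))) :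
    hostGrowth a r u ≤ a ∧ (hostGrowth a r u < a ∨ 0 < v) := by
  have away_from_fixed : ∀ p, hostGrowth a r p = a → (u, v) ≠ (p, 0) →
      (u ≠ p → hostGrowth a r u < a) →
        hostGrowth a r u ≤ a ∧ (hostGrowth a r u < a ∨ 0 < v) := by
    intro p hp hne hlt
    by_cases hup : u = p
    · subst hup
      exact ⟨hp.le, Or.inr (hv.lt_of_ne' fun hv0 => hne (by rw [hv0]))⟩
    · exact ⟨(hlt hup).le, Or.inl (hlt hup)⟩
  rcases h with ⟨hle, hne⟩ | ⟨hge, hne⟩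
  · exact away_from_fixed a (hostGrowth_self a r) hne fun hua =>
      hostGrowth_lt_of_lt hr ha1 hu (lt_of_le_of_ne hle hua)
  · exact away_from_fixed xa hxa hne fun hua =>
      (strictAntiOn_hostGrowth hr hq hxm (mem_Ici.mpr hxm_xa) (mem_Ici.mpr (hxm_xa.trans hge))
        (lt_of_le_of_ne hge (Ne.symm hua))).trans_eq hxa

end HostGrowth

namespace IsOrbit

variable {a r β : ℝ} {x y : ℕ → ℝ}

lemma x_succ_eq (h : IsOrbit a r β x y) (t : ℕ) :
    x (t + 1) = hostGrowth a r (x t) * exp (-(y t)) := by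
  rw [(h t).1, hostGrowth, sub_eq_add_neg, exp_add]
  ring

lemma nonneg (h : IsOrbit a r β x y) (hβ : 0 ≤ β) (hx0 : 0 ≤ x 0) (hy0 : 0 ≤ y 0)
    (t : ℕ) : 0 ≤ x t ∧ 0 ≤ y t := by
  induction t with
  | zero => exact ⟨hx0, hy0⟩
  | succ n ih =>
    rw [(h n).1, (h n).2]
    have hexp : exp (-(y n)) ≤ 1 := exp_le_one_iff.mpr (neg_nonpos.mpr ih.2)
    exact ⟨mul_nonneg ih.1 (exp_pos _).le,
      mul_nonneg (mul_nonneg hβ ih.1) (sub_nonneg.mpr hexp)⟩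

lemma x_succ_le (h : IsOrbit a r β x y) {t : ℕ} (hx : 0 ≤ x t) (hy : 0 ≤ y t) :
    x (t + 1) ≤ hostGrowth a r (x t) := by
  rw [h.x_succ_eq]
  have hf : 0 ≤ hostGrowth a r (x t) := mul_nonneg hx (exp_pos _).le
  exact mul_le_of_le_one_right hf (exp_le_one_iff.mpr (neg_nonpos.mpr hy))

lemma y_succ_le (h : IsOrbit a r β x y) (hβ : 0 ≤ β) {t : ℕ} (hx : 0 ≤ x t) :
    y (t + 1) ≤ β * x t := by
  rw [(h t).2]
  exact mul_le_of_le_one_right (mul_nonneg hβ hx) (by linarith [exp_pos (-(y t))])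

lemma x_succ_le_mul_exp (h : IsOrbit a r β x y) (hr : 0 ≤ r) (ha1 : a ≤ 1) {c : ℝ}
    (hca : c ≤ a) {t : ℕ} (hx : 0 ≤ x t) (hxc : x t ≤ c) (hy : 0 ≤ y t) :
    x (t + 1) ≤ x t * exp (-(r * (1 - c) * (a - c))) := by
  rw [(h t).1]
  refine mul_le_mul_of_nonneg_left (exp_le_exp.mpr ?_) hx
  have : (1 - c) * (a - c) ≤ (1 - x t) * (a - x t) := by nlinarith
  nlinarith

lemma tendsto_zero_of_lt (h : IsOrbit a r β x y) (hr : 0 < r) (ha1 : a ≤ 1) (hβ : 0 ≤ β)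
    (hnn : ∀ t, 0 ≤ x t ∧ 0 ≤ y t) {t₀ : ℕ} (hxa : x t₀ < a) :
    Tendsto x atTop (nhds 0) ∧ Tendsto y atTop (nhds 0) := by
  set c := x t₀
  set q := exp (-(r * (1 - c) * (a - c)))
  have hq0 : 0 ≤ q := (exp_pos _).le
  have hq1 : q < 1 := exp_lt_one_iff.mpr (neg_lt_zero.mpr
    (mul_pos (mul_pos hr (by linarith)) (by linarith)))
  have hgeom : ∀ n, x (t₀ + n) ≤ c * q ^ n := by
    intro n
    induction n with
    | zero => simp [c]
    | succ m ih =>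
      have hxc : x (t₀ + m) ≤ c :=
        ih.trans (mul_le_of_le_one_right (hnn t₀).1 (pow_le_one₀ hq0 hq1.le))
      calc x (t₀ + m + 1) ≤ x (t₀ + m) * q :=
            h.x_succ_le_mul_exp hr.le ha1 hxa.le (hnn _).1 hxc (hnn _).2
        _ ≤ c * q ^ m * q := mul_le_mul_of_nonneg_right ih hq0
        _ = c * q ^ (m + 1) := by ring
  have hx_shift : Tendsto (fun n => x (n + t₀)) atTop (nhds 0) := by
    refine squeeze_zero (fun n => (hnn _).1) (fun n => (add_comm n t₀) ▸ hgeom n) ?_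
    simpa using (tendsto_pow_atTop_nhds_zero_of_lt_one hq0 hq1).const_mul c
  have hx : Tendsto x atTop (nhds 0) := (tendsto_add_atTop_iff_nat t₀).mp hx_shift
  have hy_shift : Tendsto (fun t => y (t + 1)) atTop (nhds 0) :=
    squeeze_zero (fun t => (hnn _).2) (fun t => h.y_succ_le hβ (hnn t).1)
      (by simpa using hx.const_mul β)
  exact ⟨hx, (tendsto_add_atTop_iff_nat 1).mp hy_shift⟩

lemma x_one_lt (h : IsOrbit a r β x y) (ha : 0 < a) (hx0 : 0 ≤ x 0) (hy0 : 0 ≤ y 0)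
    (hfa : hostGrowth a r (x 0) ≤ a) (hstrict : hostGrowth a r (x 0) < a ∨ 0 < y 0) :
    x 1 < a := by
  rw [h.x_succ_eq]
  have hf0 : 0 ≤ hostGrowth a r (x 0) := mul_nonneg hx0 (exp_pos _).le
  have he1 : exp (-(y 0)) ≤ 1 := exp_le_one_iff.mpr (neg_nonpos.mpr hy0)
  rcases hstrict with hlt | hy
  · exact (mul_le_of_le_one_right hf0 he1).trans_lt hlt
  · calc hostGrowth a r (x 0) * exp (-(y 0)) ≤ a * exp (-(y 0)) :=
          mul_le_mul_of_nonneg_right hfa (exp_pos _).le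
      _ < a := mul_lt_of_lt_one_right ha (exp_lt_one_iff.mpr (neg_lt_zero.mpr hy))

end IsOrbit

theorem stmt_15 (a r β : ℝ) (ha : 0 < a) (ha1 : a < 1) (hr : 0 < r) (hβ : 0 < β)
    (f : ℝ → ℝ) (hf : f = fun x => x * Real.exp (r * (1 - x) * (x - a)))
    (xm : ℝ)
    (hxm : xm = (1 + a) / 4 + Real.sqrt ((a + 1) ^ 2 * r ^ 2 + 8 * r) / (4 * r))
    (xa : ℝ) (hxa1 : max 1 xm < xa) (hxa : f xa = a)
    (x y : ℕ → ℝ) (hx0 : 0 ≤ x 0) (hy0 : 0 ≤ y 0)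
    (hrec : ∀ t, x (t + 1) = x t * Real.exp (r * (1 - x t) * (x t - a) - y t) ∧
                 y (t + 1) = β * x t * (1 - Real.exp (-(y t)))) :
    (∀ t, 0 ≤ x t ∧ 0 ≤ y t) ∧
    (∀ t, 2 ≤ t → x t ≤ f xm ∧ y t ≤ β * f xm) ∧
    (((x 0 ≤ a ∧ (x 0, y 0) ≠ (a, 0)) ∨ (xa ≤ x 0 ∧ (x 0, y 0) ≠ (xa, 0))) →
      Tendsto x atTop (nhds 0) ∧ Tendsto y atTop (nhds 0)) := by
  obtain rfl : f = hostGrowth a r := hf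
  have horbit : IsOrbit a r β x y := hrec
  obtain ⟨hq, hxm_gt⟩ := critical_point_spec hr hxm
  have hnn := horbit.nonneg hβ.le hx0 hy0
  have hx_le : ∀ t, x (t + 1) ≤ hostGrowth a r xm := fun t =>
    (horbit.x_succ_le (hnn t).1 (hnn t).2).trans (hostGrowth_le_critical hr hq hxm_gt (hnn t).1)
  refine ⟨hnn, fun t ht => ?_, fun hinit => ?_⟩
  · obtain ⟨u, rfl⟩ : ∃ u, t = u + 2 := ⟨t - 2, by omega⟩
    exact ⟨hx_le (u + 1),
      (horbit.y_succ_le hβ.le (hnn _).1).trans (mul_le_mul_of_nonneg_left (hx_le u) hβ.le)⟩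
  · obtain ⟨hfa, hstrict⟩ := hostGrowth_le_threshold_of_not_fixed hr ha1.le hq hxm_gt
      ((le_max_right 1 xm).trans hxa1.le) hxa hx0 hy0 hinit
    exact horbit.tendsto_zero_of_lt hr ha1.le hβ.le hnn (horbit.x_one_lt ha hx0 hy0 hfa hstrict)
end

section
/- Let 0 < a < 1, 0 < r ≤ 2/(1-a) and for x ∈ (a,1) put y = r(1-x)(x-a) and φ(x) = x(1 - e^{-y})/y. Then φ'(x) > 0 for all x ∈ (a,1). Consequently, for each β with a < 1/β < 1 there is exactly one x ∈ (a,1) with φ(x) = 1/β, i.e., system (2.2) has a unique interior steady state. -/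
/-!
With `y = r (1 - x) (x - a)`, the quotient rule gives
`y² φ'(x) = y (1 - e^{-y}) + c ((1 + y) e^{-y} - 1)` with `c = x y'(x)`.
The bracket is negative because `e^y > 1 + y`, and `c ≤ 2` on `(a, 1)` when `r ≤ 2 / (1 - a)`,
so the right-hand side is at least `y - 2 + (y + 2) e^{-y}`, which vanishes at `0` and has
derivative `1 - (1 + y) e^{-y} > 0`. Hence `φ` is strictly increasing on `(a, 1)`.
Since `x e^{-y} < φ(x) < x` and `y → 0` at both ends of the interval, `φ` takes every value
in `(a, 1)`, exactly once by monotonicity.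
-/

open Real Set

lemma one_add_mul_exp_neg_lt_one {y : ℝ} (hy : y ≠ 0) : (1 + y) * exp (-y) < 1 := by
  rw [exp_neg, mul_inv_lt_iff₀ (exp_pos y)]
  linarith [add_one_lt_exp hy]

lemma sub_two_add_add_two_mul_exp_neg_pos {y : ℝ} (hy : 0 < y) :
    0 < y - 2 + (y + 2) * exp (-y) := by
  let h : ℝ → ℝ := fun t => t - 2 + (t + 2) * exp (-t)
  have hderiv (t : ℝ) : HasDerivAt h (1 - (1 + t) * exp (-t)) t := by
    refine (((hasDerivAt_id' t).sub_const 2).fun_add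
      (((hasDerivAt_id' t).add_const 2).fun_mul (hasDerivAt_id' t).fun_neg.exp)).congr_deriv ?_
    ring
  have hmono : StrictMonoOn h (Ici 0) :=
    strictMonoOn_of_hasDerivWithinAt_pos (convex_Ici 0)
      (fun t _ => (hderiv t).continuousAt.continuousWithinAt)
      (fun t _ => (hderiv t).hasDerivWithinAt)
      (fun t ht => by
        rw [interior_Ici] at ht
        linarith [one_add_mul_exp_neg_lt_one (ne_of_gt ht)])
  simpa [h] using hmono self_mem_Ici hy.le hy

lemma mul_one_sub_exp_neg_add_mul_pos {y c : ℝ} (hy : 0 < y) (hc : c ≤ 2) :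
    0 < y * (1 - exp (-y)) + c * ((1 + y) * exp (-y) - 1) := by
  have hneg : (1 + y) * exp (-y) - 1 < 0 := by linarith [one_add_mul_exp_neg_lt_one hy.ne']
  nlinarith [sub_two_add_add_two_mul_exp_neg_pos hy]

theorem hasDerivAt_mul_one_sub_exp_neg_div {f : ℝ → ℝ} {f' x : ℝ} (hf : HasDerivAt f f' x)
    (hfx : f x ≠ 0) :
    HasDerivAt (fun t => t * (1 - exp (-f t)) / f t)
      ((f x * (1 - exp (-f x)) + x * f' * ((1 + f x) * exp (-f x) - 1)) / f x ^ 2) x := by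
  refine (((hasDerivAt_id' x).fun_mul ((hasDerivAt_const x 1).fun_sub hf.fun_neg.exp)).fun_div
    hf hfx).congr_deriv ?_
  field_simp
  ring

namespace HostParasitoid

def hump (a r x : ℝ) : ℝ := r * (1 - x) * (x - a)

noncomputable def phi (a r x : ℝ) : ℝ := x * (1 - exp (-hump a r x)) / hump a r x

variable {a r x : ℝ}

lemma hump_pos (hr : 0 < r) (hx : x ∈ Ioo a 1) : 0 < hump a r x :=
  mul_pos (mul_pos hr (sub_pos.2 hx.2)) (sub_pos.2 hx.1)

lemma hasDerivAt_hump : HasDerivAt (hump a r) (r * (1 + a - 2 * x)) x := by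
  refine (((hasDerivAt_id' x).const_sub 1).const_mul r |>.fun_mul
    ((hasDerivAt_id' x).sub_const a)).congr_deriv ?_
  ring

lemma mul_hump_deriv_le_two (ha : 0 ≤ a) (hr : 0 ≤ r) (hr2 : r ≤ 2 / (1 - a))
    (hx : x ∈ Ioo a 1) : x * (r * (1 + a - 2 * x)) ≤ 2 := by
  obtain ⟨hax, hx1⟩ := hx
  have hquad : x * (1 + a - 2 * x) ≤ 1 - a := by
    nlinarith [mul_pos (sub_pos.2 hax) (sub_pos.2 hx1), sq_nonneg (2 * x - a - 1)]
  have hra : r * (1 - a) ≤ 2 := (le_div_iff₀ (by linarith)).1 hr2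
  nlinarith [mul_le_mul_of_nonneg_left hquad hr]

lemma exists_hasDerivAt_phi_pos (ha : 0 ≤ a) (hr : 0 < r) (hr2 : r ≤ 2 / (1 - a))
    (hx : x ∈ Ioo a 1) : ∃ D, HasDerivAt (phi a r) D x ∧ 0 < D := by
  have hy := hump_pos hr hx
  refine ⟨_, hasDerivAt_mul_one_sub_exp_neg_div hasDerivAt_hump hy.ne', div_pos ?_ (by positivity)⟩
  exact mul_one_sub_exp_neg_add_mul_pos hy (mul_hump_deriv_le_two ha hr.le hr2 hx)

lemma phi_lt_self (ha : 0 ≤ a) (hr : 0 < r) (hx : x ∈ Ioo a 1) : phi a r x < x := by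
  have hy := hump_pos hr hx
  have hx0 : 0 < x := ha.trans_lt hx.1
  rw [phi, div_lt_iff₀ hy]
  nlinarith [add_one_lt_exp (neg_ne_zero.2 hy.ne')]

lemma mul_one_sub_hump_lt_phi (ha : 0 ≤ a) (hr : 0 < r) (hx : x ∈ Ioo a 1) :
    x * (1 - hump a r x) < phi a r x := by
  have hy := hump_pos hr hx
  have hx0 : 0 < x := ha.trans_lt hx.1
  have hexp : 1 - hump a r x ≤ exp (-hump a r x) := by linarith [add_one_le_exp (-hump a r x)]
  have hmul : hump a r x * exp (-hump a r x) < 1 - exp (-hump a r x) := by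
    linarith [one_add_mul_exp_neg_lt_one hy.ne']
  rw [phi, lt_div_iff₀ hy]
  nlinarith [mul_le_mul_of_nonneg_left hexp (mul_pos hx0 hy).le, mul_lt_mul_of_pos_left hmul hx0]

lemma exists_phi_lt (ha : 0 ≤ a) (hr : 0 < r) {c : ℝ} (hc : c ∈ Ioo a 1) :
    ∃ x ∈ Ioo a c, phi a r x < c := by
  obtain ⟨hac, hc1⟩ := hc
  have hx : (a + c) / 2 ∈ Ioo a 1 := ⟨by linarith, by linarith⟩
  exact ⟨(a + c) / 2, ⟨by linarith, by linarith⟩,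
    (phi_lt_self ha hr hx).trans (by linarith)⟩

lemma exists_lt_phi (ha : 0 ≤ a) (hr : 0 < r) {c : ℝ} (hc : c ∈ Ioo a 1) :
    ∃ x ∈ Ioo c 1, c < phi a r x := by
  obtain ⟨hac, hc1⟩ := hc
  -- `1 - x = (1 - c) / (2 + r)` makes `x (1 - hump) ≥ 1 - (1 + r)(1 - x)` exceed `c`.
  set ε := (1 - c) / (2 + r) with hε
  have hε0 : 0 < ε := div_pos (by linarith) (by linarith)
  have hεr : (2 + r) * ε = 1 - c := by rw [hε]; field_simp
  have hx : 1 - ε ∈ Ioo a 1 := ⟨by nlinarith, by linarith⟩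
  refine ⟨1 - ε, ⟨by nlinarith, by linarith⟩, lt_of_le_of_lt ?_ (mul_one_sub_hump_lt_phi ha hr hx)⟩
  have hy := hump_pos hr hx
  have hyε : hump a r (1 - ε) ≤ r * ε := by
    simp only [hump, sub_sub_cancel]
    nlinarith [mul_pos hr hε0]
  nlinarith

end HostParasitoid

open HostParasitoid in
theorem stmt_17_general (a r : ℝ) (ha : 0 < a) (hr : 0 < r)
    (hr2 : r ≤ 2 / (1 - a))
    (φ : ℝ → ℝ)
    (hφ : φ = fun x =>
      x * (1 - Real.exp (-(r * (1 - x) * (x - a)))) / (r * (1 - x) * (x - a))) :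
    (∀ x ∈ Set.Ioo a 1, 0 < deriv φ x) ∧
    (∀ β : ℝ, a < 1 / β → 1 / β < 1 →
      ∃! x : ℝ, x ∈ Set.Ioo a 1 ∧ φ x = 1 / β) := by
  obtain rfl : φ = phi a r := hφ
  have hderiv : ∀ x ∈ Ioo a 1, 0 < deriv (phi a r) x := fun x hx => by
    obtain ⟨D, hD, hDpos⟩ := exists_hasDerivAt_phi_pos ha.le hr hr2 hx
    rwa [hD.deriv]
  have hcont : ContinuousOn (phi a r) (Ioo a 1) := fun x hx =>
    (differentiableAt_of_deriv_ne_zero (hderiv x hx).ne').continuousAt.continuousWithinAt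
  have hmono := strictMonoOn_of_deriv_pos (convex_Ioo a 1) hcont (by simpa using hderiv)
  refine ⟨hderiv, fun β hβa hβ1 => ?_⟩
  have hc : 1 / β ∈ Ioo a 1 := ⟨hβa, hβ1⟩
  obtain ⟨x₁, hx₁, hφx₁⟩ := exists_phi_lt ha.le hr hc
  obtain ⟨x₂, hx₂, hφx₂⟩ := exists_lt_phi ha.le hr hc
  have hsub : Icc x₁ x₂ ⊆ Ioo a 1 := Icc_subset_Ioo hx₁.1 hx₂.2
  obtain ⟨x, hx, hφx⟩ := intermediate_value_Icc (hx₁.2.trans hx₂.1).le (hcont.mono hsub)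
    ⟨hφx₁.le, hφx₂.le⟩
  exact ⟨x, ⟨hsub hx, hφx⟩, fun z ⟨hz, hφz⟩ => hmono.injOn hz (hsub hx) (hφz.trans hφx.symm)⟩

theorem stmt_17 (a r : ℝ) (ha : 0 < a) (ha1 : a < 1) (hr : 0 < r)
    (hr2 : r ≤ 2 / (1 - a))
    (φ : ℝ → ℝ)
    (hφ : φ = fun x =>
      x * (1 - Real.exp (-(r * (1 - x) * (x - a)))) / (r * (1 - x) * (x - a))) :
    (∀ x ∈ Set.Ioo a 1, 0 < deriv φ x) ∧
    (∀ β : ℝ, a < 1 / β → 1 / β < 1 →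
      ∃! x : ℝ, x ∈ Set.Ioo a 1 ∧ φ x = 1 / β) :=
  stmt_17_general a r ha hr hr2 φ hφ
end
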